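/- arXiv:2209.14937 — 8 statements merged into one kernel-verified Lean document; each statement's English description precedes it below -/
import Mathlib

section
/- For all real numbers μ, L, γ with 0 < μ < L and γ > μ, the inequality (μ + γ + √((μ - γ)² + 4γL))/(L - μ) > 2/√(L/μ) holds. -/
theorem stmt_1 (μ L γ : ℝ) (hμ : 0 < μ) (hμL : μ < L) (hγ : γ > μ) :
    (μ + γ + Real.sqrt ((μ - γ) ^ 2 + 4 * γ * L)) / (L - μ) > 2 / Real.sqrt (L / μ) := by
  have hL : 0 < L := hμ.trans hμL
  have hLμ : 0 < L - μ := by linarith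
  have hsqL : 0 < Real.sqrt L := Real.sqrt_pos.mpr hL
  have hsqμ : 0 < Real.sqrt μ := Real.sqrt_pos.mpr hμ
  have h4 : Real.sqrt 4 = 2 := by
    rw [show (4:ℝ) = 2^2 by norm_num, Real.sqrt_sq]; norm_num
  -- sqrt term > 2 * sqrt (μ * L)
  have h1 : 2 * Real.sqrt (μ * L) < Real.sqrt ((μ - γ) ^ 2 + 4 * γ * L) := by
    have : Real.sqrt (4 * (μ * L)) < Real.sqrt ((μ - γ) ^ 2 + 4 * γ * L) := by
      apply Real.sqrt_lt_sqrt (by positivity)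
      nlinarith [sq_nonneg (μ - γ)]
    rwa [Real.sqrt_mul (by norm_num) (μ * L), h4] at this
  have h2 : 2 * Real.sqrt (μ * L) < μ + γ + Real.sqrt ((μ - γ) ^ 2 + 4 * γ * L) := by
    nlinarith
  -- rewrite RHS
  have h3 : 2 / Real.sqrt (L / μ) = 2 * Real.sqrt μ / Real.sqrt L := by
    rw [Real.sqrt_div' L hμ.le]
    field_simp
  rw [h3]
  rw [gt_iff_lt, div_lt_div_iff₀ hsqL hLμ]
  have hml : Real.sqrt (μ * L) = Real.sqrt μ * Real.sqrt L := Real.sqrt_mul hμ.le L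
  have hLL : Real.sqrt L * Real.sqrt L = L := Real.mul_self_sqrt hL.le
  nlinarith [Real.sqrt_nonneg ((μ - γ) ^ 2 + 4 * γ * L)]
end

section
/- For all real μ, γ, L with γ > 0 and 0 < L/2 < μ < L, the quantity μ + γ - √(γ² - 6γμ + μ² + 4γL) is positive; hence the root α₂ = (μ + γ - √(γ² - 6γμ + μ² + 4γL))/(L - 2μ) is negative (since L - 2μ < 0). -/
theorem stmt_3 (μ γ L : ℝ) (hγ : γ > 0) (hL : 0 < L / 2) (h1 : L / 2 < μ) (h2 : μ < L) :
    0 < μ + γ - Real.sqrt (γ ^ 2 - 6 * γ * μ + μ ^ 2 + 4 * γ * L) ∧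
    (μ + γ - Real.sqrt (γ ^ 2 - 6 * γ * μ + μ ^ 2 + 4 * γ * L)) / (L - 2 * μ) < 0 := by
  have hμ : 0 < μ := lt_trans hL h1
  have hpos : 0 < μ + γ := by linarith
  have hs : Real.sqrt (γ ^ 2 - 6 * γ * μ + μ ^ 2 + 4 * γ * L) < μ + γ := by
    rw [Real.sqrt_lt' hpos]
    nlinarith
  constructor
  · linarith
  · exact div_neg_of_pos_of_neg (by linarith) (by linarith)
end

section
/- For all real μ, L with 0 < μ < L/2 and γ = μ, (μ + γ + √(γ² - 6γμ + μ² + 4γL))/(L - 2μ) > (2μ + 2√(μL))/(L - μ). -/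
theorem stmt_5 (μ γ L : ℝ) (hμ : 0 < μ) (hμL : μ < L / 2) (hγ : γ = μ) :
    (μ + γ + Real.sqrt (γ ^ 2 - 6 * γ * μ + μ ^ 2 + 4 * γ * L)) / (L - 2 * μ) >
      (2 * μ + 2 * Real.sqrt (μ * L)) / (L - μ) := by
  rw [hγ]
  have hL2 : 0 < L - 2 * μ := by linarith
  have hL1 : 0 < L - μ := by linarith
  set a := Real.sqrt (μ ^ 2 - 6 * μ * μ + μ ^ 2 + 4 * μ * L) with hadef
  set b := Real.sqrt (μ * L) with hbdef
  have hA : (0:ℝ) ≤ μ ^ 2 - 6 * μ * μ + μ ^ 2 + 4 * μ * L := by nlinarith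
  have ha2 : a ^ 2 = μ ^ 2 - 6 * μ * μ + μ ^ 2 + 4 * μ * L := Real.sq_sqrt hA
  have hb2 : b ^ 2 = μ * L := Real.sq_sqrt (by nlinarith)
  have ha0 : 0 ≤ a := Real.sqrt_nonneg _
  have hb0 : 0 < b := Real.sqrt_pos.mpr (by nlinarith)
  rw [gt_iff_lt, div_lt_div_iff₀ hL1 hL2]
  nlinarith [mul_nonneg ha0 hb0.le, mul_nonneg ha0 hμ.le, mul_pos hμ hb0,
    sq_nonneg (a - b), sq_nonneg (a + b), mul_pos (mul_pos hμ hμ) hb0,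
    mul_nonneg (mul_nonneg ha0 hμ.le) hμ.le]
end

section
/- For all real μ, γ, L with 0 < μ < L/2 and γ > μ, the inequality (μ + γ + √(γ² - 6γμ + μ² + 4γL))/(L - 2μ) > (μ + γ + √((μ - γ)² + 4γL))/(L - μ) holds. -/
theorem stmt_6 (μ γ L : ℝ) (hμ : 0 < μ) (hμL : μ < L / 2) (hγ : γ > μ) :
    (μ + γ + Real.sqrt (γ ^ 2 - 6 * γ * μ + μ ^ 2 + 4 * γ * L)) / (L - 2 * μ) >
      (μ + γ + Real.sqrt ((μ - γ) ^ 2 + 4 * γ * L)) / (L - μ) := by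
  have hγ0 : 0 < γ := lt_trans hμ hγ
  have hL2 : 0 < L - 2 * μ := by linarith
  have hL1 : 0 < L - μ := by linarith
  set D1 : ℝ := γ ^ 2 - 6 * γ * μ + μ ^ 2 + 4 * γ * L with hD1
  set D2 : ℝ := (μ - γ) ^ 2 + 4 * γ * L with hD2
  have hD1nn : 0 ≤ D1 := by nlinarith [sq_nonneg (μ - γ)]
  have hD2nn : 0 ≤ D2 := by nlinarith [sq_nonneg (μ - γ)]
  have hle : D1 ≤ D2 := by nlinarith
  set s1 := Real.sqrt D1 with hs1
  set s2 := Real.sqrt D2 with hs2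
  have hs1nn : 0 ≤ s1 := Real.sqrt_nonneg _
  have hs2nn : 0 ≤ s2 := Real.sqrt_nonneg _
  have hs1sq : s1 ^ 2 = D1 := Real.sq_sqrt hD1nn
  have hs2sq : s2 ^ 2 = D2 := Real.sq_sqrt hD2nn
  have hmono : s1 ≤ s2 := Real.sqrt_le_sqrt hle
  rw [gt_iff_lt, div_lt_div_iff₀ hL1 hL2]
  -- key: s1^2 = D1 ≥ 4γ(L-μ) > 4γ(L-2μ)
  have hD1big : 4 * γ * (L - μ) ≤ s1 ^ 2 := by nlinarith [sq_nonneg (μ - γ)]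
  nlinarith [mul_nonneg hs1nn hs2nn, mul_nonneg hs1nn hs1nn,
    mul_pos hμ hγ0, mul_nonneg (mul_nonneg hμ.le hγ0.le) (add_nonneg hs1nn hs2nn),
    mul_nonneg hs1nn (sub_nonneg.mpr hmono), mul_pos hγ0 hL2]
end

section
/- For 0 < μ ≤ λ ≤ L with λ > μ, and γ > 0, the inequality (μ + γ + √((μ - γ)² + 4γL))/(L - μ) ≤ (μ + γ + √((μ - γ)² + 4γλ))/(λ - μ) holds. -/
lemma aux_9 (μ γ t : ℝ) (hμ : 0 < μ) (hγ : γ > 0) (ht : μ < t) :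
    (μ + γ + Real.sqrt ((μ - γ) ^ 2 + 4 * γ * t)) / (t - μ) =
      4 * γ / (Real.sqrt ((μ - γ) ^ 2 + 4 * γ * t) - (μ + γ)) := by
  set s := Real.sqrt ((μ - γ) ^ 2 + 4 * γ * t) with hs
  have hnn : (0:ℝ) ≤ (μ - γ) ^ 2 + 4 * γ * t := by nlinarith
  have hsq : s ^ 2 = (μ - γ) ^ 2 + 4 * γ * t := Real.sq_sqrt hnn
  have hgt : μ + γ < s := by
    have h0 : (0:ℝ) ≤ s := Real.sqrt_nonneg _
    nlinarith [hsq]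
  have h1 : s - (μ + γ) > 0 := by linarith
  have h2 : t - μ > 0 := by linarith
  field_simp
  nlinarith [hsq]

theorem stmt_9 (μ γ L lam : ℝ) (hμ : 0 < μ) (hγ : γ > 0)
    (h1 : μ < lam) (h2 : lam ≤ L) :
    (μ + γ + Real.sqrt ((μ - γ) ^ 2 + 4 * γ * L)) / (L - μ) ≤
      (μ + γ + Real.sqrt ((μ - γ) ^ 2 + 4 * γ * lam)) / (lam - μ) := by
  have hL : μ < L := lt_of_lt_of_le h1 h2
  rw [aux_9 μ γ L hμ hγ hL, aux_9 μ γ lam hμ hγ h1]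
  have hnnl : (0:ℝ) ≤ (μ - γ) ^ 2 + 4 * γ * lam := by nlinarith
  have hgtl : μ + γ < Real.sqrt ((μ - γ) ^ 2 + 4 * γ * lam) := by
    have hsq := Real.sq_sqrt hnnl
    have h0 := Real.sqrt_nonneg ((μ - γ) ^ 2 + 4 * γ * lam)
    nlinarith
  have hmono : Real.sqrt ((μ - γ) ^ 2 + 4 * γ * lam) ≤
      Real.sqrt ((μ - γ) ^ 2 + 4 * γ * L) := by
    apply Real.sqrt_le_sqrt; nlinarith
  apply div_le_div_of_nonneg_left (by linarith) (by linarith) (by linarith)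
end

section
/- Let μ, L, γ > 0 with L > μ. Define g(λ) = (μ + γ + √((μ - γ)² + 4γλ))/(λ - μ) for λ > μ. Then g is monotonically nonincreasing on (μ, ∞). -/
theorem stmt_10 (μ L γ : ℝ) (hμ : 0 < μ) (hL : 0 < L) (hγ : 0 < γ) (hμL : L > μ) :
    AntitoneOn (fun lam : ℝ =>
      (μ + γ + Real.sqrt ((μ - γ) ^ 2 + 4 * γ * lam)) / (lam - μ)) (Set.Ioi μ) := by
  intro a ha b hb hab
  simp only [Set.mem_Ioi] at ha hb
  set sa := Real.sqrt ((μ - γ) ^ 2 + 4 * γ * a) with hsa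
  set sb := Real.sqrt ((μ - γ) ^ 2 + 4 * γ * b) with hsb
  have hpa : (0:ℝ) ≤ (μ - γ) ^ 2 + 4 * γ * a := by nlinarith
  have hpb : (0:ℝ) ≤ (μ - γ) ^ 2 + 4 * γ * b := by nlinarith
  have hsa2 : sa ^ 2 = (μ - γ) ^ 2 + 4 * γ * a := Real.sq_sqrt hpa
  have hsb2 : sb ^ 2 = (μ - γ) ^ 2 + 4 * γ * b := Real.sq_sqrt hpb
  have hab' : sa ≤ sb := Real.sqrt_le_sqrt (by nlinarith)
  have hc : μ + γ ≤ sa := by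
    have : Real.sqrt ((μ + γ) ^ 2) ≤ sa := Real.sqrt_le_sqrt (by nlinarith)
    rwa [Real.sqrt_sq (by positivity)] at this
  have h1 : 0 < a - μ := by linarith
  have h2 : 0 < b - μ := by linarith
  simp only
  rw [div_le_div_iff₀ h2 h1]
  nlinarith [mul_nonneg (sub_nonneg.mpr hab') (mul_nonneg (by nlinarith : (0:ℝ) ≤ sa + μ + γ) (by nlinarith : (0:ℝ) ≤ sb + μ + γ)), mul_pos hγ hγ]
end

section
/- Let E be the 4×4 NAG-GS iteration matrix with entries E₁₁ = E₂₂ = 1/(α+1), E₁₃ = E₂₄ = α/(1+α), E₃₃ = 1/(1+τ), E₄₂ = α(μ-L)/(γ(τ+1)(α+1)), E₄₄ = α²(μ-L)/(γ(1+τ)(1+α)) + 1/(1+τ), all other entries zero, where τ = αμ/γ and α, γ, μ, L > 0 with μ < L. Then 1/(1+α) and γ/(γ+αμ) are eigenvalues of E. -/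
theorem stmt_14 (μ L γ α : ℝ) (hμ : 0 < μ) (hL : 0 < L) (hγ : 0 < γ) (hα : 0 < α)
    (hμL : μ < L) :
    let τ : ℝ := α * μ / γ
    let E : Matrix (Fin 4) (Fin 4) ℝ :=
      !![1 / (α + 1), 0, α / (1 + α), 0;
         0, 1 / (α + 1), 0, α / (1 + α);
         0, 0, 1 / (1 + τ), 0;
         0, α * (μ - L) / (γ * (τ + 1) * (α + 1)), 0,
           α ^ 2 * (μ - L) / (γ * (1 + τ) * (1 + α)) + 1 / (1 + τ)]
    (∃ v : Fin 4 → ℝ, v ≠ 0 ∧ E.mulVec v = (1 / (1 + α)) • v) ∧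
    (∃ v : Fin 4 → ℝ, v ≠ 0 ∧ E.mulVec v = (γ / (γ + α * μ)) • v) := by
  intro τ E
  have hτ : 0 < τ := by positivity
  have h1τ : (1 : ℝ) + τ ≠ 0 := by positivity
  have h1α : (1 : ℝ) + α ≠ 0 := by positivity
  have hα1 : α + 1 ≠ 0 := by positivity
  have hγμ : γ + α * μ ≠ 0 := by positivity
  constructor
  · refine ⟨![1, 0, 0, 0], ?_, ?_⟩
    · intro h
      have := congrFun h 0
      simp at this
    · funext i
      fin_cases i <;>
        simp [E, Matrix.mulVec, dotProduct, Fin.sum_univ_four] <;> ring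
  · refine ⟨![α * (1 + τ), 0, α - τ, 0], ?_, ?_⟩
    · intro h
      have h0 := congrFun h 0
      simp at h0
      rcases h0 with h0 | h0
      · exact hα.ne' h0
      · exact h1τ (by linarith)
    · have hτγ : τ = α * μ / γ := rfl
      have key : γ / (γ + α * μ) = 1 / (1 + τ) := by
        rw [hτγ]; field_simp
      rw [key]
      funext i
      fin_cases i <;>
        simp [E, Matrix.mulVec, dotProduct, Fin.sum_univ_four] <;>
        field_simp <;> ring
end

section
/- Let μ, γ, L > 0 with γ = μ < L, and let λ₄(α) be defined for α ≥ α_c = (2μ + 2√(μL))/(L - μ) by λ₄(α) = [2γ + αγ + αμ - Lα² + α²μ - α√(L²α² - 2Lα²μ - 2Lαμ - 2γLα - 4γL + α²μ² + 2αμ² + 2γαμ + μ² + 2γμ + γ²)] / [2(γ + αγ + αμ + α²μ)]. Then λ₄(α) → -(L-μ)/μ as α → ∞; in particular |λ₄(α)| → κ - 1 where κ = L/μ. -/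
theorem stmt_16 (μ γ L : ℝ) (hμ : 0 < μ) (hγμ : γ = μ) (hμL : μ < L) :
    let lam4 : ℝ → ℝ := fun α =>
      (2 * γ + α * γ + α * μ - L * α ^ 2 + α ^ 2 * μ -
        α * Real.sqrt (L ^ 2 * α ^ 2 - 2 * L * α ^ 2 * μ - 2 * L * α * μ - 2 * γ * L * α -
          4 * γ * L + α ^ 2 * μ ^ 2 + 2 * α * μ ^ 2 + 2 * γ * α * μ + μ ^ 2 +
          2 * γ * μ + γ ^ 2)) /
      (2 * (γ + α * γ + α * μ + α ^ 2 * μ))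
    Filter.Tendsto lam4 Filter.atTop (nhds (-(L - μ) / μ)) ∧
    Filter.Tendsto (fun α => |lam4 α|) Filter.atTop (nhds (L / μ - 1)) := by
  subst hγμ
  intro lam4
  have hμne : γ ≠ 0 := hμ.ne'
  set F : ℝ → ℝ := fun t =>
    (2*γ*t^2 + 2*γ*t - L + γ -
      Real.sqrt ((L-γ)^2 - 4*γ*(L-γ)*t - 4*γ*(L-γ)*t^2)) /
    (2*(γ*t^2 + 2*γ*t + γ)) with hF
  have hF0 : F 0 = -(L - γ)/γ := by
    simp only [hF]
    rw [show (L-γ)^2 - 4*γ*(L-γ)*0 - 4*γ*(L-γ)*0^2 = (L-γ)^2 by ring,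
      Real.sqrt_sq (by linarith)]
    field_simp
    ring
  have hcont : ContinuousAt F 0 := by
    apply ContinuousAt.div
    · exact (Continuous.continuousAt (by continuity))
    · exact (Continuous.continuousAt (by continuity))
    · norm_num [hμne]
  have hinv : Filter.Tendsto (fun α : ℝ => α⁻¹) Filter.atTop (nhds 0) :=
    tendsto_inv_atTop_zero
  have hcomp : Filter.Tendsto (fun α : ℝ => F α⁻¹) Filter.atTop (nhds (-(L - γ)/γ)) := by
    rw [← hF0]
    exact hcont.tendsto.comp hinv
  have heq : ∀ᶠ α : ℝ in Filter.atTop, F α⁻¹ = lam4 α := by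
    filter_upwards [Filter.eventually_gt_atTop 0] with α hα
    have hαne : α ≠ 0 := hα.ne'
    simp only [hF, lam4]
    have harg : (L-γ)^2 - 4*γ*(L-γ)*α⁻¹ - 4*γ*(L-γ)*(α⁻¹)^2 =
        (α⁻¹)^2 * (L ^ 2 * α ^ 2 - 2 * L * α ^ 2 * γ - 2 * L * α * γ - 2 * γ * L * α -
          4 * γ * L + α ^ 2 * γ ^ 2 + 2 * α * γ ^ 2 + 2 * γ * α * γ + γ ^ 2 +
          2 * γ * γ + γ ^ 2) := by
      field_simp
      ring
    rw [harg, Real.sqrt_mul (sq_nonneg _), Real.sqrt_sq (by positivity : (0:ℝ) ≤ α⁻¹)]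
    generalize Real.sqrt _ = s
    have hden : 2*(γ*(α⁻¹)^2 + 2*γ*α⁻¹ + γ) ≠ 0 := by positivity
    have hden2 : 2 * (γ + α * γ + α * γ + α ^ 2 * γ) ≠ 0 := by positivity
    field_simp
    ring
  have hmain : Filter.Tendsto lam4 Filter.atTop (nhds (-(L - γ)/γ)) :=
    hcomp.congr' heq
  refine ⟨hmain, ?_⟩
  have habs := hmain.abs
  have : |(-(L - γ)/γ)| = L/γ - 1 := by
    rw [abs_of_nonpos (by apply div_nonpos_of_nonpos_of_nonneg <;> linarith)]
    field_simp
  rwa [this] at habs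
end
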